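/- arXiv:1506.09159 — 2 statements merged into one kernel-verified Lean document; each statement's English description precedes it below -/
import Mathlib

section
/- Let q ∈ (0,1), s ∈ (0,1) and x > 0. Then Γ_q(x+s) ≤ [x]_q^s · Γ_q(x). -/
/-- The q-deformed Gamma function:
    `Γ_q(x) = (1-q)^(1-x) * ∏_{n=0}^∞ (1-q^(n+1))/(1-q^(n+x))`. -/
noncomputable def qGamma (q x : ℝ) : ℝ :=
  (1 - q) ^ (1 - x) * ∏' n : ℕ, (1 - q ^ ((n : ℝ) + 1)) / (1 - q ^ ((n : ℝ) + x))

/-- The q-bracket: `[x]_q = (1-q^x)/(1-q)`. -/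
noncomputable def qBracket (q x : ℝ) : ℝ := (1 - q ^ x) / (1 - q)

/-!
With `L y = ∑ n, log (1 - q^(n+y))` one has `Γ_q(x) = exp ((1-x) log (1-q) + L 1 - L x)`.
Each `y ↦ log (1 - q^y)` is concave on `(0, ∞)` (weighted AM-GM, applied to `q^y, q^z` and then
to `1 - q^y, 1 - q^z`), hence so is `L`, while shifting the index gives
`L x - L (x+1) = log (1 - q^x)`. Concavity of `L` between `x` and `x + 1` yields
`L x - L (x+s) ≤ s log (1 - q^x)`, which is the logarithm of the claimed inequality.
-/

open Real Set

section

variable {q : ℝ}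

theorem concaveOn_log_one_sub_rpow (hq0 : 0 < q) (hq1 : q < 1) :
    ConcaveOn ℝ (Ioi (0 : ℝ)) (fun y => log (1 - q ^ y)) := by
  refine ⟨convex_Ioi 0, fun y hy z hz a b ha hb hab => ?_⟩
  have hy1 : q ^ y < 1 := rpow_lt_one hq0.le hq1 hy
  have hz1 : q ^ z < 1 := rpow_lt_one hq0.le hq1 hz
  have hgeom : q ^ (a * y + b * z) ≤ a * q ^ y + b * q ^ z :=
    calc q ^ (a * y + b * z) = (q ^ y) ^ a * (q ^ z) ^ b := by
          rw [← rpow_mul hq0.le, ← rpow_mul hq0.le, ← rpow_add hq0, mul_comm y, mul_comm z]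
      _ ≤ a * q ^ y + b * q ^ z :=
          geom_mean_le_arith_mean2_weighted ha hb (by positivity) (by positivity) hab
  have hcompl : (1 - q ^ y) ^ a * (1 - q ^ z) ^ b ≤ 1 - q ^ (a * y + b * z) :=
    calc (1 - q ^ y) ^ a * (1 - q ^ z) ^ b ≤ a * (1 - q ^ y) + b * (1 - q ^ z) :=
          geom_mean_le_arith_mean2_weighted ha hb (by linarith) (by linarith) hab
      _ ≤ 1 - q ^ (a * y + b * z) := by linear_combination hgeom + hab
  calc a • log (1 - q ^ y) + b • log (1 - q ^ z)
      = log ((1 - q ^ y) ^ a * (1 - q ^ z) ^ b) := by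
        rw [log_mul (by positivity) (by positivity), log_rpow (by linarith), log_rpow (by linarith),
          smul_eq_mul, smul_eq_mul]
    _ ≤ log (1 - q ^ (a • y + b • z)) := log_le_log (by positivity) hcompl

theorem summable_log_one_sub_rpow_natCast_add (hq0 : 0 < q) (hq1 : q < 1) (y : ℝ) :
    Summable (fun n : ℕ => log (1 - q ^ ((n : ℝ) + y))) := by
  have hgeom : Summable (fun n : ℕ => q ^ ((n : ℝ) + y)) := by
    simp_rw [rpow_add hq0, rpow_natCast]
    exact (summable_geometric_of_lt_one hq0.le hq1).mul_right _
  simpa [sub_eq_add_neg] using Real.summable_log_one_add_of_summable hgeom.neg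

/-- The logarithm of the infinite q-Pochhammer symbol `(q^y; q)_∞ = ∏ n, (1 - q^(n+y))`. -/
noncomputable def logQPochhammer (q y : ℝ) : ℝ := ∑' n : ℕ, log (1 - q ^ ((n : ℝ) + y))

theorem logQPochhammer_eq_log_add (hq0 : 0 < q) (hq1 : q < 1) (y : ℝ) :
    logQPochhammer q y = log (1 - q ^ y) + logQPochhammer q (y + 1) := by
  rw [logQPochhammer, (summable_log_one_sub_rpow_natCast_add hq0 hq1 y).tsum_eq_zero_add]
  simp only [logQPochhammer, Nat.cast_zero, zero_add, Nat.cast_succ, add_assoc, add_comm 1 y]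

theorem concaveOn_logQPochhammer (hq0 : 0 < q) (hq1 : q < 1) :
    ConcaveOn ℝ (Ioi 0) (logQPochhammer q) := by
  refine ⟨convex_Ioi 0, fun y hy z hz a b ha hb hab => ?_⟩
  have hsummable := summable_log_one_sub_rpow_natCast_add hq0 hq1
  have hterm (n : ℕ) := (concaveOn_log_one_sub_rpow hq0 hq1).2
    (mem_Ioi.2 (add_pos_of_nonneg_of_pos n.cast_nonneg hy))
    (mem_Ioi.2 (add_pos_of_nonneg_of_pos n.cast_nonneg hz)) ha hb hab
  simp only [smul_eq_mul, logQPochhammer] at hterm ⊢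
  rw [← tsum_mul_left, ← tsum_mul_left,
    ← ((hsummable y).mul_left a).tsum_add ((hsummable z).mul_left b)]
  refine ((hsummable y).mul_left a |>.add ((hsummable z).mul_left b)).tsum_le_tsum
    (fun n => ?_) (hsummable _)
  have hmix : a * ((n : ℝ) + y) + b * ((n : ℝ) + z) = n + (a * y + b * z) := by
    linear_combination (n : ℝ) * hab
  rw [← hmix]
  exact hterm n

theorem qGamma_eq_exp (hq0 : 0 < q) (hq1 : q < 1) {x : ℝ} (hx : 0 < x) :
    qGamma q x = exp (log (1 - q) * (1 - x) + logQPochhammer q 1 - logQPochhammer q x) := by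
  have hpos {y : ℝ} (hy : 0 < y) (n : ℕ) : 0 < 1 - q ^ ((n : ℝ) + y) :=
    sub_pos.2 (rpow_lt_one hq0.le hq1 (by positivity))
  have hprod : HasProd (fun n : ℕ => (1 - q ^ ((n : ℝ) + 1)) / (1 - q ^ ((n : ℝ) + x)))
      (exp (logQPochhammer q 1 - logQPochhammer q x)) := by
    refine hasProd_of_hasSum_log (fun n => div_pos (hpos one_pos n) (hpos hx n)) ?_
    simp only [log_div (hpos one_pos _).ne' (hpos hx _).ne']
    exact (summable_log_one_sub_rpow_natCast_add hq0 hq1 1).hasSum.sub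
      (summable_log_one_sub_rpow_natCast_add hq0 hq1 x).hasSum
  rw [qGamma, hprod.tprod_eq, rpow_def_of_pos (sub_pos.2 hq1), ← exp_add, add_sub_assoc]

end

theorem qGamma_upper (q s x : ℝ) (hq : q ∈ Set.Ioo (0 : ℝ) 1)
    (hs : s ∈ Set.Ioo (0 : ℝ) 1) (hx : 0 < x) :
    qGamma q (x + s) ≤ qBracket q x ^ s * qGamma q x := by
  obtain ⟨hq0, hq1⟩ := hq
  obtain ⟨hs0, hs1⟩ := hs
  have hconcave : (1 - s) * logQPochhammer q x + s * logQPochhammer q (x + 1) ≤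
      logQPochhammer q (x + s) := by
    have h := (concaveOn_logQPochhammer hq0 hq1).2 (mem_Ioi.2 hx)
      (mem_Ioi.2 (by linarith : 0 < x + 1)) (sub_nonneg.2 hs1.le) hs0.le (sub_add_cancel 1 s)
    simp only [smul_eq_mul] at h
    rwa [show (1 - s) * x + s * (x + 1) = x + s by ring] at h
  have hshift := logQPochhammer_eq_log_add hq0 hq1 x
  have hbracket : qBracket q x ^ s = exp ((log (1 - q ^ x) - log (1 - q)) * s) := by
    have hqx : 0 < 1 - q ^ x := sub_pos.2 (rpow_lt_one hq0.le hq1 hx)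
    rw [qBracket, rpow_def_of_pos (div_pos hqx (sub_pos.2 hq1)),
      log_div hqx.ne' (sub_pos.2 hq1).ne']
  rw [qGamma_eq_exp hq0 hq1 (by linarith), qGamma_eq_exp hq0 hq1 hx, hbracket, ← exp_add,
    exp_le_exp]
  linear_combination hconcave + s * hshift
end

section
/- Let q ∈ (0,1) be fixed. Then the function U defined for x > 0 by U(x) = Γ_q(x+1) / Γ_q(x + 1/2) is strictly increasing on (0,∞). -/
/-!
Taking logarithms, `Γ_q(x+1)/Γ_q(x+1/2) = (1-q)^(-1/2) exp (∑ₙ log ((1 - q^(n+x+1/2))/(1 - q^(n+x+1))))`.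
Writing `a = q^(n+x)`, the `n`-th term is `log ((1 - a √q)/(1 - a q))`, and since `√q > q` this
increases as `a` decreases, i.e. as `x` increases.
-/

open Real Set

theorem StrictMonoOn.tsum {ι α β : Type*} [Nonempty ι] [Preorder β] [AddCommGroup α]
    [PartialOrder α] [IsOrderedAddMonoid α] [TopologicalSpace α] [IsTopologicalAddGroup α]
    [OrderClosedTopology α] {f : ι → β → α} {s : Set β} (hf : ∀ i, StrictMonoOn (f i) s)
    (hsum : ∀ x ∈ s, Summable fun i => f i x) :
    StrictMonoOn (fun x => ∑' i, f i x) s := fun x hx y hy hxy =>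
  (hsum x hx).tsum_lt_tsum (i := Classical.arbitrary ι) (fun i => (hf i hx hy hxy).le)
    (hf _ hx hy hxy) (hsum y hy)

section

variable {q : ℝ}

lemma summable_log_one_sub_rpow (hq0 : 0 < q) (hq1 : q < 1) (y : ℝ) :
    Summable fun n : ℕ => log (1 - q ^ ((n : ℝ) + y)) := by
  have hgeom : Summable fun n : ℕ => -q ^ ((n : ℝ) + y) := by
    simpa only [rpow_add hq0, rpow_natCast, neg_mul] using
      ((summable_geometric_of_lt_one hq0.le hq1).mul_right (q ^ y)).neg
  simpa only [← sub_eq_add_neg] using summable_log_one_add_of_summable hgeom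

lemma one_sub_rpow_pos (hq0 : 0 < q) (hq1 : q < 1) {y : ℝ} (hy : 0 < y) : 0 < 1 - q ^ y :=
  sub_pos.2 (rpow_lt_one hq0.le hq1 hy)

lemma qGamma_eq_rpow_mul_exp (hq0 : 0 < q) (hq1 : q < 1) {y : ℝ} (hy : 0 < y) :
    qGamma q y = (1 - q) ^ (1 - y) *
      exp (∑' n : ℕ, (log (1 - q ^ ((n : ℝ) + 1)) - log (1 - q ^ ((n : ℝ) + y)))) := by
  have hpos (z : ℝ) (hz : 0 < z) (n : ℕ) : 0 < 1 - q ^ ((n : ℝ) + z) :=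
    one_sub_rpow_pos hq0 hq1 (by positivity)
  have hlog (n : ℕ) : log ((1 - q ^ ((n : ℝ) + 1)) / (1 - q ^ ((n : ℝ) + y))) =
      log (1 - q ^ ((n : ℝ) + 1)) - log (1 - q ^ ((n : ℝ) + y)) :=
    log_div (hpos 1 one_pos n).ne' (hpos y hy n).ne'
  have hsum := (summable_log_one_sub_rpow hq0 hq1 1).sub (summable_log_one_sub_rpow hq0 hq1 y)
  simp only [← hlog] at hsum ⊢
  rw [rexp_tsum_eq_tprod (fun n => div_pos (hpos 1 one_pos n) (hpos y hy n)) hsum, qGamma]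

lemma qGamma_div_qGamma (hq0 : 0 < q) (hq1 : q < 1) {a b : ℝ} (ha : 0 < a) (hb : 0 < b) :
    qGamma q a / qGamma q b = (1 - q) ^ (b - a) *
      exp (∑' n : ℕ, (log (1 - q ^ ((n : ℝ) + b)) - log (1 - q ^ ((n : ℝ) + a)))) := by
  have hs := summable_log_one_sub_rpow hq0 hq1
  rw [qGamma_eq_rpow_mul_exp hq0 hq1 ha, qGamma_eq_rpow_mul_exp hq0 hq1 hb, mul_div_mul_comm,
    ← rpow_sub (sub_pos.2 hq1), ← exp_sub, ← ((hs 1).sub (hs a)).tsum_sub ((hs 1).sub (hs b))]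
  congr 1
  · congr 1
    ring
  · exact congrArg exp (tsum_congr fun n => by ring)

lemma strictMonoOn_log_one_sub_rpow_sub (hq0 : 0 < q) (hq1 : q < 1) {c d : ℝ} (hcd : c < d) :
    StrictMonoOn (fun x => log (1 - q ^ (x + c)) - log (1 - q ^ (x + d))) (Ioi (-c)) := by
  intro x (hx : -c < x) y (hy : -c < y) hxy
  dsimp only
  have hpos (z e : ℝ) (hz : -c < z) (he : c ≤ e) : 0 < 1 - q ^ (z + e) :=
    one_sub_rpow_pos hq0 hq1 (by linarith)
  rw [← log_div (hpos x c hx le_rfl).ne' (hpos x d hx hcd.le).ne',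
    ← log_div (hpos y c hy le_rfl).ne' (hpos y d hy hcd.le).ne']
  refine log_lt_log (div_pos (hpos x c hx le_rfl) (hpos x d hx hcd.le)) ?_
  rw [div_lt_div_iff₀ (hpos x d hx hcd.le) (hpos y d hy hcd.le)]
  -- with `A = q^x > B = q^y` and `C = q^c > D = q^d` this is `(1 - AC)(1 - BD) < (1 - BC)(1 - AD)`
  have hBA : q ^ y < q ^ x := rpow_lt_rpow_of_exponent_gt hq0 hq1 hxy
  have hDC : q ^ d < q ^ c := rpow_lt_rpow_of_exponent_gt hq0 hq1 hcd
  simp only [rpow_add hq0]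
  nlinarith [mul_pos (sub_pos.2 hBA) (sub_pos.2 hDC)]

end

theorem qGammaRatio_strictMonoOn (q : ℝ) (hq : q ∈ Set.Ioo (0 : ℝ) 1) :
    StrictMonoOn (fun x : ℝ => qGamma q (x + 1) / qGamma q (x + 1 / 2))
      (Set.Ioi (0 : ℝ)) := by
  obtain ⟨hq0, hq1⟩ := hq
  set S : ℝ → ℝ := fun x =>
    ∑' n : ℕ, (log (1 - q ^ ((n : ℝ) + (x + 1 / 2))) - log (1 - q ^ ((n : ℝ) + (x + 1))))
  have hS : StrictMonoOn S (Ioi 0) := by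
    refine StrictMonoOn.tsum (fun n x hx y hy hxy => ?_) fun x _ =>
      (summable_log_one_sub_rpow hq0 hq1 _).sub (summable_log_one_sub_rpow hq0 hq1 _)
    have hc : -((n : ℝ) + 1 / 2) < 0 := by linarith [n.cast_nonneg (α := ℝ)]
    simpa only [add_left_comm (n : ℝ)] using strictMonoOn_log_one_sub_rpow_sub hq0 hq1
      (by linarith : (n : ℝ) + 1 / 2 < n + 1) (hc.trans hx) (hc.trans hy) hxy
  have hU : EqOn (fun x => (1 - q) ^ (-(1 / 2) : ℝ) * exp (S x))
      (fun x => qGamma q (x + 1) / qGamma q (x + 1 / 2)) (Ioi 0) := fun x (hx : 0 < x) => by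
    dsimp only
    rw [qGamma_div_qGamma hq0 hq1 (by linarith) (by linarith)]
    congr 2
    ring
  exact ((strictMono_mul_left_of_pos (rpow_pos_of_pos (sub_pos.2 hq1) _)).comp_strictMonoOn
    (exp_strictMono.comp_strictMonoOn hS)).congr hU
end
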